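/- Let C₁, C₃, M, D₀ ≥ 0 be real numbers. Let f : [-1, ∞) → ℝ be continuous, differentiable on [0, ∞), with |f'(t)| ≤ C₁·exp(-t) for all t ≥ 0. Let h : [-1, ∞) → ℝ be continuous with 0 ≤ h(s) for all s ≥ -1, h(s) ≤ M for all s ≥ 0, and ∫_{-1}^{0} h(s) ds ≤ D₀. Let E : [0, ∞) → ℝ satisfy 0 ≤ E(t) ≤ C₃·exp(-2t) for all t ≥ 0. Assume that for every t ≥ 0 one has f(-1) ≥ f(t) - (∫_{-1}^{t} h(s) ds)·√(E(t)). Then f(-1) ≥ f(0) - C₁. -/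

import Mathlib

/-!
Along the ray `t ≥ 0` the slope inequality gives `f(-1) ≥ f(t) - d(t) √E(t)`. The exponential decay
of `f'` keeps `f(t) ≥ f(0) - C₁`, while the length `d(t) = ∫_{-1}^t h` grows at most linearly and `√E(t)` decays
like `e^{-t}`, so the error term tends to `0` as `t → ∞`.
-/

open Real Set Filter Topology

lemma sub_mul_exp_neg_le_of_hasDerivAt {f f' : ℝ → ℝ} {C a t : ℝ} (hat : a ≤ t)
    (hf : ∀ x ∈ Icc a t, HasDerivAt f (f' x) x)
    (hf' : ∀ x ∈ Icc a t, -(C * exp (-x)) ≤ f' x) :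
    f a - C * (exp (-a) - exp (-t)) ≤ f t := by
  have hg : ∀ x ∈ Icc a t,
      HasDerivAt (fun y => f y - C * exp (-y)) (f' x + C * exp (-x)) x := fun x hx =>
    ((hf x hx).sub (((hasDerivAt_neg x).exp).const_mul C)).congr_deriv (by ring)
  have hmono : MonotoneOn (fun y => f y - C * exp (-y)) (Icc a t) :=
    monotoneOn_of_hasDerivWithinAt_nonneg (convex_Icc a t)
      (fun x hx => (hg x hx).continuousAt.continuousWithinAt)
      (fun x hx => (hg x (interior_subset hx)).hasDerivWithinAt)
      (fun x hx => by linarith [hf' x (interior_subset hx)])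
  have := hmono (left_mem_Icc.2 hat) (right_mem_Icc.2 hat) hat
  simp only at this
  linarith

lemma intervalIntegral_le_add_mul_sub {h : ℝ → ℝ} {a b t M : ℝ} (hab : a ≤ b) (hbt : b ≤ t)
    (hcont : ContinuousOn h (Icc a t)) (hM : ∀ s ∈ Icc b t, h s ≤ M) :
    ∫ s in a..t, h s ≤ (∫ s in a..b, h s) + M * (t - b) := by
  have hint : ∀ c d, c ∈ Icc a t → d ∈ Icc a t → IntervalIntegrable h MeasureTheory.volume c d :=
    fun c d hc hd => (hcont.mono (uIcc_subset_Icc hc hd)).intervalIntegrable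
  have hat : a ≤ t := hab.trans hbt
  have htail : ∫ s in b..t, h s ≤ M * (t - b) := by
    simpa [mul_comm] using intervalIntegral.integral_mono_on hbt
      (hint b t ⟨hab, hbt⟩ (right_mem_Icc.2 hat)) intervalIntegrable_const hM
  rw [← intervalIntegral.integral_add_adjacent_intervals
    (hint a b (left_mem_Icc.2 hat) ⟨hab, hbt⟩) (hint b t ⟨hab, hbt⟩ (right_mem_Icc.2 hat))]
  linarith

lemma sqrt_le_sqrt_mul_exp_neg {E C t : ℝ} (hE : E ≤ C * exp (-2 * t)) :
    √E ≤ √C * exp (-t) := by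
  have hsq : exp (-2 * t) = exp (-t) * exp (-t) := by rw [← exp_add]; ring_nf
  calc √E ≤ √(C * exp (-2 * t)) := sqrt_le_sqrt hE
    _ = √C * exp (-t) := by
      rw [sqrt_mul' C (exp_nonneg _), hsq, sqrt_mul_self (exp_nonneg _)]

lemma tendsto_add_mul_mul_exp_neg_atTop_nhds_zero (D M : ℝ) :
    Tendsto (fun t => (D + M * t) * exp (-t)) atTop (𝓝 0) := by
  have hlin : Tendsto (fun t => t * exp (-t)) atTop (𝓝 0) := by
    simpa using tendsto_pow_mul_exp_neg_atTop_nhds_zero 1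
  simpa [add_mul, mul_assoc] using
    (tendsto_exp_neg_atTop_nhds_zero.const_mul D).add (hlin.const_mul M)

theorem stmt_4_general (C₁ C₃ M D₀ : ℝ) (hC₁ : 0 ≤ C₁) (hM : 0 ≤ M)
    (hD₀ : 0 ≤ D₀) (f f' h E : ℝ → ℝ)
    (hfdiff : ∀ t ≥ (0 : ℝ), HasDerivAt f (f' t) t)
    (hfbound : ∀ t ≥ (0 : ℝ), |f' t| ≤ C₁ * Real.exp (-t))
    (hhcont : ContinuousOn h (Set.Ici (-1 : ℝ)))
    (hhbound : ∀ s ≥ (0 : ℝ), h s ≤ M)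
    (hhint : (∫ s in (-1 : ℝ)..(0 : ℝ), h s) ≤ D₀)
    (hE : ∀ t ≥ (0 : ℝ), E t ≤ C₃ * Real.exp (-2 * t))
    (hslope : ∀ t ≥ (0 : ℝ),
      f (-1) ≥ f t - (∫ s in (-1 : ℝ)..t, h s) * Real.sqrt (E t)) :
    f (-1) ≥ f 0 - C₁ := by
  have hf_lower : ∀ t ≥ (0 : ℝ), f 0 - C₁ ≤ f t := fun t ht => by
    have := sub_mul_exp_neg_le_of_hasDerivAt ht (fun x hx => hfdiff x hx.1)
      (fun x hx => (abs_le.1 (hfbound x hx.1)).1)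
    rw [neg_zero, exp_zero] at this
    nlinarith [exp_pos (-t)]
  have hlength : ∀ t ≥ (0 : ℝ), ∫ s in (-1 : ℝ)..t, h s ≤ D₀ + M * t := fun t ht => by
    have := intervalIntegral_le_add_mul_sub (by norm_num) ht (hhcont.mono Icc_subset_Ici_self)
      (fun s hs => hhbound s hs.1)
    linarith
  have herror : ∀ t ≥ (0 : ℝ), f 0 - C₁ - √C₃ * ((D₀ + M * t) * exp (-t)) ≤ f (-1) :=
    fun t ht => by
      have := mul_le_mul (hlength t ht) (sqrt_le_sqrt_mul_exp_neg (hE t ht)) (sqrt_nonneg _)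
        (by positivity)
      linarith [hslope t ht, hf_lower t ht]
  have hlim : Tendsto (fun t : ℝ => f 0 - C₁ - √C₃ * ((D₀ + M * t) * exp (-t))) atTop
      (𝓝 (f 0 - C₁)) := by
    simpa using tendsto_const_nhds.sub
      ((tendsto_add_mul_mul_exp_neg_atTop_nhds_zero D₀ M).const_mul √C₃)
  exact le_of_tendsto hlim (eventually_atTop.2 ⟨0, herror⟩)

/-- Full analytic skeleton of the proof of Theorem 0.1: the modified K-energy `f`,
the speed `h` of the path of potentials, and the modified Calabi energy `E`,
together with Chen's slope-type inequality, give the lower bound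
`f(-1) ≥ f(0) - C₁`. -/
theorem stmt_4 (C₁ C₃ M D₀ : ℝ) (hC₁ : 0 ≤ C₁) (hC₃ : 0 ≤ C₃) (hM : 0 ≤ M)
    (hD₀ : 0 ≤ D₀) (f f' h E : ℝ → ℝ)
    (hfcont : ContinuousOn f (Set.Ici (-1 : ℝ)))
    (hfdiff : ∀ t ≥ (0 : ℝ), HasDerivAt f (f' t) t)
    (hfbound : ∀ t ≥ (0 : ℝ), |f' t| ≤ C₁ * Real.exp (-t))
    (hhcont : ContinuousOn h (Set.Ici (-1 : ℝ)))
    (hhnonneg : ∀ s ≥ (-1 : ℝ), 0 ≤ h s)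
    (hhbound : ∀ s ≥ (0 : ℝ), h s ≤ M)
    (hhint : (∫ s in (-1 : ℝ)..(0 : ℝ), h s) ≤ D₀)
    (hE₀ : ∀ t ≥ (0 : ℝ), 0 ≤ E t)
    (hE : ∀ t ≥ (0 : ℝ), E t ≤ C₃ * Real.exp (-2 * t))
    (hslope : ∀ t ≥ (0 : ℝ),
      f (-1) ≥ f t - (∫ s in (-1 : ℝ)..t, h s) * Real.sqrt (E t)) :
    f (-1) ≥ f 0 - C₁ :=
  stmt_4_general C₁ C₃ M D₀ hC₁ hM hD₀ f f' h E hfdiff hfbound hhcont hhbound hhint hE hslope
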